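/- (Remark after Lemma 4 of the paper, Eq. (10), three-mode case via mode-1 matricization.) Let X ∈ ℝ^{I₁ × (I₂·I₃)} (the mode-1 matricization of a third-order tensor of size I₁ × I₂ × I₃), and let P₁ ∈ ℝ^{I₁×I₁}, P₂ ∈ ℝ^{I₂×I₂}, P₃ ∈ ℝ^{I₃×I₃} be orthogonal projection matrices (Pᵢᵀ = Pᵢ and Pᵢ² = Pᵢ for i = 1,2,3). Denoting by ⊗ the Kronecker product and by I_m the m×m identity matrix, one has ‖X − P₁ X (P₂ ⊗ P₃)‖_F² ≤ ‖X − P₁ X‖_F² + ‖X − X (P₂ ⊗ I_{I₃})‖_F² + ‖X − X (I_{I₂} ⊗ P₃)‖_F². -/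

import Mathlib

/-!
For an orthogonal projection `P`, the matrices `M * P` and `N * (1 - P)` are orthogonal in the
trace inner product, so `‖X - Y P‖² = ‖(X - Y) P‖² + ‖X (1 - P)‖² ≤ ‖X - Y‖² + ‖X - X P‖²`,
and symmetrically for a projection acting on the left. Peeling off `P₁` on the left with
`Y = X (P₂ ⊗ P₃)`, and then `P₂ ⊗ I` on the right with `Y = X (I ⊗ P₃)`, using
`(I ⊗ P₃)(P₂ ⊗ I) = P₂ ⊗ P₃`, gives the bound.
-/

open Matrix Kronecker

noncomputable def frobNorm {m n : Type*} [Fintype m] [Fintype n]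
    (A : Matrix m n ℝ) : ℝ :=
  Real.sqrt (∑ i, ∑ j, (A i j) ^ 2)

section Projection

variable {m n : Type*} [Fintype m] [Fintype n]

theorem frobNorm_sq (A : Matrix m n ℝ) : frobNorm A ^ 2 = trace (Aᵀ * A) := by
  rw [frobNorm, Real.sq_sqrt (by positivity), trace, Finset.sum_comm]
  simp [mul_apply, sq]

theorem frobNorm_transpose (A : Matrix m n ℝ) : frobNorm Aᵀ = frobNorm A := by
  rw [frobNorm, frobNorm, Finset.sum_comm]
  rfl

variable [DecidableEq n] {P : Matrix n n ℝ}

theorem frobNorm_mul_add_mul_one_sub_sq (hsym : Pᵀ = P) (hidem : P * P = P)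
    (M N : Matrix m n ℝ) :
    frobNorm (M * P + N * (1 - P)) ^ 2 = frobNorm (M * P) ^ 2 + frobNorm (N * (1 - P)) ^ 2 := by
  have hQP : (1 - P) * P = 0 := by rw [Matrix.sub_mul, hidem, Matrix.one_mul, sub_self]
  have hMN : trace ((M * P)ᵀ * (N * (1 - P))) = 0 := by
    rw [transpose_mul, hsym, Matrix.mul_assoc, trace_mul_comm, Matrix.mul_assoc,
      Matrix.mul_assoc, hQP, Matrix.mul_zero, Matrix.mul_zero, trace_zero]
  have hNM : trace ((N * (1 - P))ᵀ * (M * P)) = 0 := by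
    rw [← trace_transpose, transpose_mul, transpose_transpose, hMN]
  simp only [frobNorm_sq, transpose_add, Matrix.add_mul, Matrix.mul_add, trace_add, hMN, hNM]
  ring

theorem frobNorm_mul_sq_le (hsym : Pᵀ = P) (hidem : P * P = P) (M : Matrix m n ℝ) :
    frobNorm (M * P) ^ 2 ≤ frobNorm M ^ 2 := by
  have h := frobNorm_mul_add_mul_one_sub_sq hsym hidem M M
  rw [← Matrix.mul_add, add_sub_cancel, Matrix.mul_one] at h
  exact h ▸ le_add_of_nonneg_right (sq_nonneg _)

theorem frobNorm_sub_mul_sq_le (hsym : Pᵀ = P) (hidem : P * P = P) (X Y : Matrix m n ℝ) :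
    frobNorm (X - Y * P) ^ 2 ≤ frobNorm (X - X * P) ^ 2 + frobNorm (X - Y) ^ 2 := by
  have hsplit : X - Y * P = (X - Y) * P + X * (1 - P) := by
    rw [Matrix.sub_mul, Matrix.mul_sub, Matrix.mul_one]; abel
  rw [hsplit, frobNorm_mul_add_mul_one_sub_sq hsym hidem, Matrix.mul_sub, Matrix.mul_one]
  linarith [frobNorm_mul_sq_le hsym hidem (X - Y)]

end Projection

theorem frobNorm_sub_mul_left_sq_le {m n : Type*} [Fintype m] [Fintype n] [DecidableEq m]
    {P : Matrix m m ℝ} (hsym : Pᵀ = P) (hidem : P * P = P) (X Y : Matrix m n ℝ) :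
    frobNorm (X - P * Y) ^ 2 ≤ frobNorm (X - P * X) ^ 2 + frobNorm (X - Y) ^ 2 := by
  rw [← frobNorm_transpose (X - P * Y), ← frobNorm_transpose (X - P * X),
    ← frobNorm_transpose (X - Y)]
  simp only [transpose_sub, transpose_mul, hsym]
  exact frobNorm_sub_mul_sq_le hsym hidem Xᵀ Yᵀ

theorem one_kronecker_mul_kronecker_one {R l n : Type*} [CommSemiring R] [Fintype l]
    [Fintype n] [DecidableEq l] [DecidableEq n] (A : Matrix l l R) (B : Matrix n n R) :
    (1 ⊗ₖ B) * (A ⊗ₖ 1) = A ⊗ₖ B := by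
  rw [← mul_kronecker_mul, Matrix.one_mul, Matrix.mul_one]

theorem frob_three_mode_projection_bound_general {I₁ I₂ I₃ : ℕ}
    (X : Matrix (Fin I₁) (Fin I₂ × Fin I₃) ℝ)
    (P₁ : Matrix (Fin I₁) (Fin I₁) ℝ)
    (P₂ : Matrix (Fin I₂) (Fin I₂) ℝ)
    (P₃ : Matrix (Fin I₃) (Fin I₃) ℝ)
    (hP₁sym : P₁ᵀ = P₁) (hP₁idem : P₁ * P₁ = P₁)
    (hP₂sym : P₂ᵀ = P₂) (hP₂idem : P₂ * P₂ = P₂) :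
    frobNorm (X - P₁ * X * (P₂ ⊗ₖ P₃)) ^ 2
      ≤ frobNorm (X - P₁ * X) ^ 2
        + frobNorm (X - X * (P₂ ⊗ₖ (1 : Matrix (Fin I₃) (Fin I₃) ℝ))) ^ 2
        + frobNorm (X - X * ((1 : Matrix (Fin I₂) (Fin I₂) ℝ) ⊗ₖ P₃)) ^ 2 := by
  have hsym : (P₂ ⊗ₖ (1 : Matrix (Fin I₃) (Fin I₃) ℝ))ᵀ = P₂ ⊗ₖ 1 := by
    rw [← kroneckerMap_transpose, hP₂sym, transpose_one]
  have hidem : (P₂ ⊗ₖ (1 : Matrix (Fin I₃) (Fin I₃) ℝ)) * (P₂ ⊗ₖ 1) = P₂ ⊗ₖ 1 := by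
    rw [← mul_kronecker_mul, hP₂idem, Matrix.mul_one]
  have hmode₁ := frobNorm_sub_mul_left_sq_le hP₁sym hP₁idem X (X * (P₂ ⊗ₖ P₃))
  have hmodes₂₃ := frobNorm_sub_mul_sq_le hsym hidem X
    (X * ((1 : Matrix (Fin I₂) (Fin I₂) ℝ) ⊗ₖ P₃))
  rw [Matrix.mul_assoc, one_kronecker_mul_kronecker_one] at hmodes₂₃
  rw [Matrix.mul_assoc]
  linarith

/-- Pythagorean-type bound (Eq. (10) of the paper, three-mode case via the mode-1
matricization): the error of a simultaneous three-mode orthogonal projection is at most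
the sum of the single-mode projection errors. -/
theorem frob_three_mode_projection_bound {I₁ I₂ I₃ : ℕ}
    (X : Matrix (Fin I₁) (Fin I₂ × Fin I₃) ℝ)
    (P₁ : Matrix (Fin I₁) (Fin I₁) ℝ)
    (P₂ : Matrix (Fin I₂) (Fin I₂) ℝ)
    (P₃ : Matrix (Fin I₃) (Fin I₃) ℝ)
    (hP₁sym : P₁ᵀ = P₁) (hP₁idem : P₁ * P₁ = P₁)
    (hP₂sym : P₂ᵀ = P₂) (hP₂idem : P₂ * P₂ = P₂)
    (hP₃sym : P₃ᵀ = P₃) (hP₃idem : P₃ * P₃ = P₃) :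
    frobNorm (X - P₁ * X * (P₂ ⊗ₖ P₃)) ^ 2
      ≤ frobNorm (X - P₁ * X) ^ 2
        + frobNorm (X - X * (P₂ ⊗ₖ (1 : Matrix (Fin I₃) (Fin I₃) ℝ))) ^ 2
        + frobNorm (X - X * ((1 : Matrix (Fin I₂) (Fin I₂) ℝ) ⊗ₖ P₃)) ^ 2 :=
  frob_three_mode_projection_bound_general X P₁ P₂ P₃ hP₁sym hP₁idem hP₂sym hP₂idem
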